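/- arXiv:2008.00517 — 5 statements merged into one kernel-verified Lean document; each statement's English description precedes it below -/
import Mathlib

section
/- Let (a_t)_{t≥1}, (b_t)_{t≥1}, (g_t)_{t≥1} be sequences of real numbers satisfying the recurrence a_{t+1} = (1 - b_t/t)·a_t + g_t for all t ≥ 1. If b_t converges to a real number b > 0 and g_t converges to a real number g as t → ∞, then a_t/t converges to g/(b+1) as t → ∞. -/
/-!
Subtracting the candidate linear profile `L t`, `L = g₀ / (b₀ + 1)`, leaves `y t = a t - L t` with
`y (t + 1) = (1 - b t / t) y t + δ t` and `δ t → 0`. Since `b t > 0` eventually, the factor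
`1 - b t / t` eventually lies in `[-1, 1]`, so `|y (t + 1)| ≤ |y t| + |δ t|`; hence `|y t| / t` is
bounded by a Cesàro mean of `|δ|` plus `O(1 / t)` and tends to `0`.
-/

open Filter Topology Finset

theorem tendsto_div_natCast_zero_of_abs_succ_le {u e : ℕ → ℝ} (he : Tendsto e atTop (𝓝 0))
    (hu : ∀ᶠ t in atTop, |u (t + 1)| ≤ |u t| + e t) :
    Tendsto (fun t : ℕ => u t / t) atTop (𝓝 0) := by
  -- `e'` agrees with `e` eventually and satisfies the step bound for every `t`.
  set e' : ℕ → ℝ := fun t => max (e t) (|u (t + 1)| - |u t|)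
  have he' : Tendsto e' atTop (𝓝 0) := by
    refine he.congr' ?_
    filter_upwards [hu] with t ht
    exact (max_eq_left (by linarith)).symm
  have hbound : ∀ t, |u t| ≤ |u 0| + ∑ i ∈ range t, e' i := by
    intro t
    induction t with
    | zero => simp
    | succ t ih =>
      rw [sum_range_succ]
      linarith [le_max_right (e t) (|u (t + 1)| - |u t|)]
  have hmajorant : Tendsto (fun t : ℕ => |u 0| / t + (t⁻¹ : ℝ) * ∑ i ∈ range t, e' i)
      atTop (𝓝 0) := by
    simpa using (tendsto_const_div_atTop_nhds_zero_nat _).add he'.cesaro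
  refine squeeze_zero_norm' (Eventually.of_forall fun t => ?_) hmajorant
  rw [Real.norm_eq_abs, abs_div, Nat.abs_cast, div_eq_inv_mul, div_eq_inv_mul, ← mul_add]
  exact mul_le_mul_of_nonneg_left (hbound t) (by positivity)

theorem tendsto_div_natCast_zero_of_eq_mul_add {y c δ : ℕ → ℝ}
    (hrec : ∀ᶠ t in atTop, y (t + 1) = c t * y t + δ t) (hc : ∀ᶠ t in atTop, |c t| ≤ 1)
    (hδ : Tendsto δ atTop (𝓝 0)) :
    Tendsto (fun t : ℕ => y t / t) atTop (𝓝 0) := by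
  refine tendsto_div_natCast_zero_of_abs_succ_le (e := fun t => |δ t|) ?_ ?_
  · simpa using hδ.abs
  filter_upwards [hrec, hc] with t hyt hct
  calc |y (t + 1)| ≤ |c t| * |y t| + |δ t| := by rw [hyt, ← abs_mul]; exact abs_add_le _ _
    _ ≤ |y t| + |δ t| := by gcongr; exact mul_le_of_le_one_left (abs_nonneg _) hct

theorem eventually_abs_one_sub_div_natCast_le_one {b : ℕ → ℝ} {b₀ : ℝ} (hb₀ : 0 < b₀)
    (hb : Tendsto b atTop (𝓝 b₀)) : ∀ᶠ t : ℕ in atTop, |1 - b t / t| ≤ 1 := by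
  have hdiv : Tendsto (fun t : ℕ => b t / t) atTop (𝓝 0) := by
    simpa using hb.div_atTop tendsto_natCast_atTop_atTop
  filter_upwards [hb.eventually (eventually_gt_nhds hb₀),
    hdiv.eventually (eventually_le_nhds two_pos)] with t hpos hle
  rw [abs_le]
  constructor <;> linarith [div_nonneg hpos.le (Nat.cast_nonneg (α := ℝ) t)]

/-- Durrett's recurrence lemma: if `a (t+1) = (1 - b t / t) * a t + g t` for all `t ≥ 1`,
`b t → b₀ > 0` and `g t → g₀`, then `a t / t → g₀ / (b₀ + 1)`. -/
theorem durrett_recurrence (a b g : ℕ → ℝ) (b₀ g₀ : ℝ) (hb₀ : 0 < b₀)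
    (hrec : ∀ t : ℕ, 1 ≤ t → a (t + 1) = (1 - b t / (t : ℝ)) * a t + g t)
    (hb : Filter.Tendsto b Filter.atTop (nhds b₀))
    (hg : Filter.Tendsto g Filter.atTop (nhds g₀)) :
    Filter.Tendsto (fun t : ℕ => a t / (t : ℝ)) Filter.atTop (nhds (g₀ / (b₀ + 1))) := by
  set L := g₀ / (b₀ + 1)
  have hδ : Tendsto (fun t => g t - L * (b t + 1)) atTop (𝓝 0) := by
    have hL : g₀ - L * (b₀ + 1) = 0 := by
      rw [div_mul_cancel₀ _ (by positivity), sub_self]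
    simpa [hL] using hg.sub ((hb.add_const 1).const_mul L)
  have hy : Tendsto (fun t : ℕ => (a t - L * t) / t) atTop (𝓝 0) := by
    refine tendsto_div_natCast_zero_of_eq_mul_add ?_
      (eventually_abs_one_sub_div_natCast_le_one hb₀ hb) hδ
    filter_upwards [eventually_gt_atTop 0] with t ht
    rw [hrec t ht]
    push_cast
    field_simp
    ring
  rw [← zero_add L]
  refine (hy.add_const L).congr' ?_
  filter_upwards [eventually_gt_atTop 0] with t ht
  field_simp
  ring
end

section
/- Let c ≥ 0 and d > 0 be real numbers, and let f : ℕ → ℝ satisfy the recurrence f(k) = ((k - 1 + c)/(k + c + d))·f(k-1) for every integer k ≥ 2. Then i^{d+1}·f(i) converges to f(1)·Γ(2 + c + d)/Γ(1 + c) as i → ∞; in particular, if f(1) > 0 then f(i) is asymptotically proportional to i^{-(1+d)}. -/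
/-!
Unrolling the recurrence gives `f (n + 2) = f 1 * ∏_{j ≤ n} (a + j) / (a + b + j)` with
`a = 1 + c`, `b = d + 1`. By the definition of Euler's sequence `GammaSeq`, `n ^ b` times this
product is exactly `GammaSeq (a + b) n / GammaSeq a n`, which tends to `Γ(a + b) / Γ(a)` by
Euler's limit formula; replacing `n ^ b` by `(n + 2) ^ b` does not change the limit.
-/

open Filter Finset Real Topology

theorem apply_add_one_eq_mul_prod_of_recurrence {M : Type*} [CommMonoid M] {f r : ℕ → M}
    (hrec : ∀ k, 2 ≤ k → f k = r k * f (k - 1)) (n : ℕ) :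
    f (n + 1) = f 1 * ∏ j ∈ range n, r (j + 2) := by
  induction n with
  | zero => simp
  | succ n ih =>
    rw [hrec (n + 2) (by omega), show n + 2 - 1 = n + 1 by omega, ih, prod_range_succ]
    ac_rfl

theorem GammaSeq_add_div_GammaSeq (a b : ℝ) {n : ℕ} (hn : n ≠ 0) :
    GammaSeq (a + b) n / GammaSeq a n =
      (n : ℝ) ^ b * ∏ j ∈ range (n + 1), (a + j) / (a + b + j) := by
  have hn' : (0 : ℝ) < n := by positivity
  rw [GammaSeq, GammaSeq, div_div_div_eq, prod_div_distrib, rpow_add hn']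
  field_simp

theorem tendsto_rpow_mul_prod_div_add {a : ℝ} (b : ℝ) (ha : Gamma a ≠ 0) :
    Tendsto (fun n : ℕ => (n : ℝ) ^ b * ∏ j ∈ range (n + 1), (a + j) / (a + b + j)) atTop
      (𝓝 (Gamma (a + b) / Gamma a)) :=
  ((GammaSeq_tendsto_Gamma _).div (GammaSeq_tendsto_Gamma _) ha).congr'
    (eventually_ne_atTop 0 |>.mono fun _ hn => GammaSeq_add_div_GammaSeq a b hn)

theorem tendsto_natCast_add_rpow_mul_of_tendsto {u : ℕ → ℝ} {L : ℝ} (b x : ℝ) (hx : 0 ≤ x)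
    (hu : Tendsto (fun n : ℕ => (n : ℝ) ^ b * u n) atTop (𝓝 L)) :
    Tendsto (fun n : ℕ => ((n : ℝ) + x) ^ b * u n) atTop (𝓝 L) := by
  have hratio : Tendsto (fun n : ℕ => ((n : ℝ) / (n + x)) ^ b) atTop (𝓝 1) := by
    simpa using (tendsto_natCast_div_add_atTop x).rpow_const (Or.inl one_ne_zero)
  refine (div_one L ▸ hu.div hratio one_ne_zero).congr' ?_
  filter_upwards [eventually_ne_atTop 0] with n hn
  have hn' : (0 : ℝ) < n := by positivity
  rw [Pi.div_apply, div_rpow hn'.le (by positivity)]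
  field_simp

theorem power_law_tail_general (c d : ℝ) (hc : 0 ≤ c) (f : ℕ → ℝ)
    (hrec : ∀ k : ℕ, 2 ≤ k →
      f k = (((k : ℝ) - 1 + c) / ((k : ℝ) + c + d)) * f (k - 1)) :
    Filter.Tendsto (fun i : ℕ => (i : ℝ) ^ (d + 1) * f i) Filter.atTop
      (nhds (f 1 * Real.Gamma (2 + c + d) / Real.Gamma (1 + c))) := by
  have hclosed (n : ℕ) :
      f (n + 2) = f 1 * ∏ j ∈ range (n + 1), (1 + c + j) / (2 + c + d + j) := by
    rw [apply_add_one_eq_mul_prod_of_recurrence hrec (n + 1)]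
    congr 1
    refine prod_congr rfl fun j _ => ?_
    push_cast
    ring_nf
  have hΓ : Gamma (1 + c) ≠ 0 := (Gamma_pos_of_pos (by linarith)).ne'
  have hshift : Tendsto (fun n : ℕ => (n : ℝ) ^ (d + 1) * f (n + 2)) atTop
      (𝓝 (f 1 * Gamma (2 + c + d) / Gamma (1 + c))) := by
    have h := (tendsto_rpow_mul_prod_div_add (d + 1) hΓ).const_mul (f 1)
    rw [show 1 + c + (d + 1) = 2 + c + d by ring, ← mul_div_assoc] at h
    exact h.congr fun n => by rw [hclosed]; ring
  rw [← tendsto_add_atTop_iff_nat 2]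
  simpa only [Nat.cast_add, Nat.cast_ofNat] using
    tendsto_natCast_add_rpow_mul_of_tendsto (d + 1) 2 zero_le_two hshift

/-- Power-law tail asymptotics of the solution of the recurrence
`f k = ((k - 1 + c)/(k + c + d)) * f (k-1)` for `k ≥ 2`:
`i^(d+1) * f i → f 1 * Γ(2+c+d)/Γ(1+c)`. -/
theorem power_law_tail (c d : ℝ) (hc : 0 ≤ c) (hd : 0 < d) (f : ℕ → ℝ)
    (hrec : ∀ k : ℕ, 2 ≤ k →
      f k = (((k : ℝ) - 1 + c) / ((k : ℝ) + c + d)) * f (k - 1)) :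
    Filter.Tendsto (fun i : ℕ => (i : ℝ) ^ (d + 1) * f i) Filter.atTop
      (nhds (f 1 * Real.Gamma (2 + c + d) / Real.Gamma (1 + c))) :=
  power_law_tail_general c d hc f hrec
end

section
/- Let G = (V, E) be a digraph with m = |E| ≥ 1 arcs. Fix x ∈ V. Then Σ_{(u₁,v₁) ∈ E} Σ_{u₂ ∈ N⁻(v₁)} [(u₂,x) ∈ E] · 1/(m·d⁻(v₁)·d⁺(u₂)) = d⁻(x)/m. Equivalently: if u₁ is chosen with probability d⁺(u₁)/m, then v₁ uniformly in N⁺(u₁), then u₂ uniformly in N⁻(v₁), then v₂ uniformly in N⁺(u₂), the probability that v₂ = x equals d⁻(x)/m. -/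
/-!
The walk is a composition of two averaging steps: the weight `1/m` of each arc `(u₁, v₁)` is spread
uniformly over the arcs into `v₁`, and then the weight of each arc `(u₂, v₁)` is spread uniformly
over the arcs out of `u₂`. Averaging a function over the fibres of a map and summing the averages
over all points gives back the plain sum, because a fibre of size `c` is visited `c` times. So each
arc ends up carrying weight `1/m` again, and `x` receives `1/m` from each of its `d⁻(x)` in-arcs.
-/

open Finset

theorem Finset.sum_div_card_fiber {α β 𝕜 : Type*} [DecidableEq β] [Semifield 𝕜]
    [CharZero 𝕜] (s : Finset α) (k : α → β) (g : α → 𝕜) :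
    ∑ a ∈ s, (∑ b ∈ s with k b = k a, g b) / (#{b ∈ s | k b = k a} : 𝕜) = ∑ b ∈ s, g b := by
  rw [sum_comp (fun y => (∑ b ∈ s with k b = y, g b) / (#{b ∈ s | k b = y} : 𝕜)) k]
  calc
    _ = ∑ y ∈ s.image k, ∑ b ∈ s with k b = y, g b := by
      refine sum_congr rfl fun y hy => ?_
      obtain ⟨a, ha, rfl⟩ := mem_image.1 hy
      have hfiber : (#{b ∈ s | k b = k a} : 𝕜) ≠ 0 :=
        Nat.cast_ne_zero.2 (card_ne_zero.2 ⟨a, mem_filter.2 ⟨ha, rfl⟩⟩)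
      rw [nsmul_eq_mul, mul_div_cancel₀ _ hfiber]
    _ = ∑ b ∈ s, g b := sum_fiberwise_of_maps_to (fun _ => mem_image_of_mem k) g

theorem Finset.sum_filter_fst_eq_ite_snd_eq {α β M : Type*} [DecidableEq α] [DecidableEq β]
    [AddCommMonoid M] (s : Finset (α × β)) (a : α) (b : β) (c : M) :
    ∑ p ∈ s with p.1 = a, (if p.2 = b then c else 0) = if (a, b) ∈ s then c else 0 := by
  rw [sum_filter, ← sum_ite_eq' s (a, b) fun _ => c]
  refine sum_congr rfl fun p _ => ?_
  simp only [← ite_and, Prod.ext_iff]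

theorem three_step_walk_in_degree_general {V : Type*} [DecidableEq V]
    (E : Finset (V × V)) (x : V) :
    (∑ e ∈ E, ∑ u₂ ∈ (E.filter (fun f => f.2 = e.2)).image Prod.fst,
        if (u₂, x) ∈ E then
          (1 : ℝ) / ((E.card : ℝ) * ((E.filter (fun f => f.2 = e.2)).card : ℝ) *
            ((E.filter (fun f => f.1 = u₂)).card : ℝ))
        else 0)
      = ((E.filter (fun f => f.2 = x)).card : ℝ) / (E.card : ℝ) := by
  set m : ℝ := (#E : ℝ)
  have havg_in : ∀ e ∈ E, ∑ u₂ ∈ (E.filter (fun f => f.2 = e.2)).image Prod.fst,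
      (if (u₂, x) ∈ E then 1 / (m * #{f ∈ E | f.2 = e.2} * #{f ∈ E | f.1 = u₂}) else 0)
      = (∑ f ∈ E with f.2 = e.2, if (f.1, x) ∈ E then 1 / (m * #{g ∈ E | g.1 = f.1}) else 0)
        / #{f ∈ E | f.2 = e.2} := by
    intro e _
    have hfst_inj : Set.InjOn (Prod.fst : V × V → V) ↑{f ∈ E | f.2 = e.2} := by
      intro f hf g hg h
      rw [coe_filter] at hf hg
      exact Prod.ext h (hf.2.trans hg.2.symm)
    rw [sum_image hfst_inj, sum_div]
    refine sum_congr rfl fun f _ => ?_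
    split_ifs
    · rw [div_div, mul_right_comm]
    · rw [zero_div]
  have havg_out : ∀ f ∈ E, (if (f.1, x) ∈ E then 1 / (m * #{g ∈ E | g.1 = f.1}) else 0)
      = (∑ g ∈ E with g.1 = f.1, if g.2 = x then 1 / m else 0) / #{g ∈ E | g.1 = f.1} := by
    intro f _
    rw [sum_filter_fst_eq_ite_snd_eq]
    split_ifs
    · rw [div_div]
    · rw [zero_div]
  rw [sum_congr rfl havg_in, sum_div_card_fiber E Prod.snd, sum_congr rfl havg_out,
    sum_div_card_fiber E Prod.fst, sum_ite, sum_const_zero, add_zero, sum_const, nsmul_eq_mul,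
    mul_one_div]

/-- In a digraph with `m ≥ 1` arcs and no self-loops, after the three-step alternating
walk (arc `(u₁,v₁)` with probability `1/m`, then `u₂` uniform in `N⁻(v₁)`, then `v₂`
uniform in `N⁺(u₂)`), the probability of landing on `x` is `d⁻(x)/m`:
`Σ_{(u₁,v₁) ∈ E} Σ_{u₂ ∈ N⁻(v₁)} [(u₂,x) ∈ E] / (m · d⁻(v₁) · d⁺(u₂)) = d⁻(x)/m`. -/
theorem three_step_walk_in_degree {V : Type*} [Fintype V] [DecidableEq V]
    (E : Finset (V × V)) (hloop : ∀ e ∈ E, e.1 ≠ e.2) (hm : 1 ≤ E.card) (x : V) :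
    (∑ e ∈ E, ∑ u₂ ∈ (E.filter (fun f => f.2 = e.2)).image Prod.fst,
        if (u₂, x) ∈ E then
          (1 : ℝ) / ((E.card : ℝ) * ((E.filter (fun f => f.2 = e.2)).card : ℝ) *
            ((E.filter (fun f => f.1 = u₂)).card : ℝ))
        else 0)
      = ((E.filter (fun f => f.2 = x)).card : ℝ) / (E.card : ℝ) :=
  three_step_walk_in_degree_general E x
end

section
/- Let S be a finite set, p ∈ [0,1], and let μ be the probability measure on subsets ω ⊆ S under which each element of S is included in ω independently with probability p. Let 𝒜 be a finite family of subsets of S, each of cardinality l ≥ 1, and let X(ω) = |{A ∈ 𝒜 : A ⊆ ω}|. For 1 ≤ i ≤ l, let Δ_i = {(A,B) ∈ 𝒜 × 𝒜 : |A ∩ B| = i}. Then Var(X) ≤ Σ_{i=1}^{l} p^{2l − i}·|Δ_i|. -/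
/-!
Write `X = ∑_{A ∈ 𝒜} 1[A ⊆ ω]`. Since `A ⊆ ω` has probability `p ^ |A|`, expanding the square gives
`Var X = ∑_{A, B ∈ 𝒜} (p ^ |A ∪ B| - p ^ |A| p ^ |B|)`. A disjoint pair contributes `0`; any other
pair contributes at most `p ^ |A ∪ B| = p ^ (2l - |A ∩ B|)`, as `p ^ |A| p ^ |B| = (p ^ l) ^ 2 ≥ 0`.
-/
open Finset

section

variable {S : Type*} [DecidableEq S]

theorem sum_bernoulli_mul_indicator_superset [Fintype S] (p : ℝ) (T : Finset S) :
    ∑ w : Finset S, p ^ #w * (1 - p) ^ (Fintype.card S - #w) * (if T ⊆ w then 1 else 0) =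
      p ^ #T := by
  have hdisj : ∀ u ∈ (univ \ T).powerset, Disjoint T u := fun u hu =>
    disjoint_of_subset_right (mem_powerset.mp hu) disjoint_sdiff
  have hinj : Set.InjOn (T ∪ ·) ((univ \ T).powerset : Set (Finset S)) := fun u hu v hv huv =>
    by simpa [union_sdiff_cancel_left (hdisj u hu), union_sdiff_cancel_left (hdisj v hv)]
      using congrArg (· \ T) huv
  calc ∑ w : Finset S, p ^ #w * (1 - p) ^ (Fintype.card S - #w) * (if T ⊆ w then 1 else 0)
      = ∑ w ∈ Icc T univ, p ^ #w * (1 - p) ^ (Fintype.card S - #w) := by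
        simp only [mul_ite, mul_one, mul_zero, ← sum_filter]
        congr 1; ext; simp
    _ = ∑ u ∈ (univ \ T).powerset, p ^ #T * (p ^ #u * (1 - p) ^ (#(univ \ T) - #u)) := by
        rw [Icc_eq_image_powerset (subset_univ T), sum_image hinj]
        refine sum_congr rfl fun u hu => ?_
        rw [card_union_of_disjoint (hdisj u hu), card_sdiff_of_subset (subset_univ T), card_univ,
          pow_add, Nat.sub_add_eq]
        ring
    _ = p ^ #T := by rw [← mul_sum, sum_pow_mul_eq_add_pow]; simp

theorem sum_bernoulli_mul_card_filter_subset [Fintype S] {ι : Type*} (p : ℝ) (ℬ : Finset ι)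
    (g : ι → Finset S) :
    ∑ w : Finset S, p ^ #w * (1 - p) ^ (Fintype.card S - #w) * (#{b ∈ ℬ | g b ⊆ w} : ℝ) =
      ∑ b ∈ ℬ, p ^ #(g b) := by
  simp only [natCast_card_filter, mul_sum]
  rw [sum_comm]
  exact sum_congr rfl fun b _ => sum_bernoulli_mul_indicator_superset p (g b)

theorem card_filter_subset_sq (𝒜 : Finset (Finset S)) (w : Finset S) :
    #{A ∈ 𝒜 | A ⊆ w} ^ 2 = #{AB ∈ 𝒜 ×ˢ 𝒜 | AB.1 ∪ AB.2 ⊆ w} := by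
  rw [sq, ← card_product, ← filter_product]
  simp only [union_subset_iff]

theorem bernoulli_variance_card_filter_subset_eq_sum_product [Fintype S] (p : ℝ)
    (𝒜 : Finset (Finset S)) :
    (∑ w : Finset S, p ^ #w * (1 - p) ^ (Fintype.card S - #w) * (#{A ∈ 𝒜 | A ⊆ w} : ℝ) ^ 2) -
      (∑ w : Finset S, p ^ #w * (1 - p) ^ (Fintype.card S - #w) * (#{A ∈ 𝒜 | A ⊆ w} : ℝ)) ^ 2 =
      ∑ AB ∈ 𝒜 ×ˢ 𝒜, (p ^ #(AB.1 ∪ AB.2) - p ^ #AB.1 * p ^ #AB.2) := by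
  simp only [← Nat.cast_pow, card_filter_subset_sq]
  rw [sum_bernoulli_mul_card_filter_subset, sum_bernoulli_mul_card_filter_subset p 𝒜 fun A => A,
    sum_sub_distrib, sq, sum_mul_sum, ← sum_product' (f := fun A B => p ^ #A * p ^ #B)]

theorem card_union_of_card_eq {l : ℕ} {A B : Finset S} (hA : #A = l) (hB : #B = l) :
    #(A ∪ B) = 2 * l - #(A ∩ B) := by
  have := card_union_add_card_inter A B
  omega

theorem pow_card_union_sub_le {l : ℕ} (p : ℝ) {A B : Finset S} (hA : #A = l) (hB : #B = l) :
    p ^ #(A ∪ B) - p ^ #A * p ^ #B ≤ if Disjoint A B then 0 else p ^ #(A ∪ B) := by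
  split_ifs with h
  · rw [card_union_of_disjoint h, pow_add, sub_self]
  · rw [hA, hB, ← sq]
    linarith [sq_nonneg (p ^ l)]

theorem sum_filter_not_disjoint_pow_card_union {l : ℕ} (p : ℝ) (𝒜 : Finset (Finset S))
    (hcard : ∀ A ∈ 𝒜, #A = l) :
    ∑ AB ∈ 𝒜 ×ˢ 𝒜 with ¬Disjoint AB.1 AB.2, p ^ #(AB.1 ∪ AB.2) =
      ∑ i ∈ Icc 1 l, p ^ (2 * l - i) * #{AB ∈ 𝒜 ×ˢ 𝒜 | #(AB.1 ∩ AB.2) = i} := by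
  have hmaps : ∀ AB ∈ {AB ∈ 𝒜 ×ˢ 𝒜 | ¬Disjoint AB.1 AB.2}, #(AB.1 ∩ AB.2) ∈ Icc 1 l := by
    simp only [mem_filter, mem_product, mem_Icc, and_imp, Prod.forall]
    intro A B hA _ hAB
    exact ⟨card_pos.mpr (not_disjoint_iff_nonempty_inter.mp hAB),
      hcard A hA ▸ card_le_card inter_subset_left⟩
  rw [← sum_fiberwise_of_maps_to hmaps]
  refine sum_congr rfl fun i hi => ?_
  have hfiber : {AB ∈ 𝒜 ×ˢ 𝒜 | ¬Disjoint AB.1 AB.2 ∧ #(AB.1 ∩ AB.2) = i} =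
      {AB ∈ 𝒜 ×ˢ 𝒜 | #(AB.1 ∩ AB.2) = i} := by
    refine filter_congr fun AB _ => and_iff_right_of_imp fun h hdisj => ?_
    rw [disjoint_iff_inter_eq_empty.mp hdisj, card_empty] at h
    exact Nat.one_le_iff_ne_zero.mp (mem_Icc.mp hi).1 h.symm
  rw [filter_filter, hfiber, ← nsmul_eq_mul', ← sum_const]
  refine sum_congr rfl fun AB hAB => ?_
  obtain ⟨hmem, hi⟩ := mem_filter.mp hAB
  rw [card_union_of_card_eq (hcard _ (mem_product.mp hmem).1) (hcard _ (mem_product.mp hmem).2), hi]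

end

theorem sampling_estimator_variance_bound_general {S : Type*} [Fintype S] [DecidableEq S]
    (p : ℝ) (l : ℕ)
    (𝒜 : Finset (Finset S)) (hcard : ∀ A ∈ 𝒜, A.card = l) :
    (∑ w : Finset S, p ^ w.card * (1 - p) ^ (Fintype.card S - w.card) *
        (((𝒜.filter (fun A => A ⊆ w)).card : ℝ)) ^ 2) -
      (∑ w : Finset S, p ^ w.card * (1 - p) ^ (Fintype.card S - w.card) *
        ((𝒜.filter (fun A => A ⊆ w)).card : ℝ)) ^ 2
    ≤ ∑ i ∈ Finset.Icc 1 l, p ^ (2 * l - i) *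
        (((𝒜 ×ˢ 𝒜).filter (fun AB => (AB.1 ∩ AB.2).card = i)).card : ℝ) := by
  rw [bernoulli_variance_card_filter_subset_eq_sum_product,
    ← sum_filter_not_disjoint_pow_card_union p 𝒜 hcard, sum_filter]
  refine sum_le_sum fun AB hAB => ?_
  rw [ite_not]
  exact pow_card_union_sub_le p (hcard _ (mem_product.mp hAB).1) (hcard _ (mem_product.mp hAB).2)

/-- Variance bound for the sampling estimator: with `X(ω)` the number of patterns
`A ∈ 𝒜` (each of cardinality `l ≥ 1`) contained in `ω`, under the product Bernoulli(p)
measure on subsets of `S`, `Var(X) ≤ Σ_{i=1}^{l} p^(2l-i) · |Δ_i|` where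
`Δ_i = {(A,B) ∈ 𝒜 × 𝒜 : |A ∩ B| = i}`. -/
theorem sampling_estimator_variance_bound {S : Type*} [Fintype S] [DecidableEq S]
    (p : ℝ) (hp0 : 0 ≤ p) (hp1 : p ≤ 1) (l : ℕ) (hl : 1 ≤ l)
    (𝒜 : Finset (Finset S)) (hcard : ∀ A ∈ 𝒜, A.card = l) :
    (∑ w : Finset S, p ^ w.card * (1 - p) ^ (Fintype.card S - w.card) *
        (((𝒜.filter (fun A => A ⊆ w)).card : ℝ)) ^ 2) -
      (∑ w : Finset S, p ^ w.card * (1 - p) ^ (Fintype.card S - w.card) *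
        ((𝒜.filter (fun A => A ⊆ w)).card : ℝ)) ^ 2
    ≤ ∑ i ∈ Finset.Icc 1 l, p ^ (2 * l - i) *
        (((𝒜 ×ˢ 𝒜).filter (fun AB => (AB.1 ∩ AB.2).card = i)).card : ℝ) :=
  sampling_estimator_variance_bound_general p l 𝒜 hcard
end

section
/- Let G = (V, E) be a digraph, let u ∈ V, and let v, w be two distinct in-neighbors of u. Then the number of arcs (s, z) ∈ E with s ∈ {v, w} and z ∉ {u, v, w} equals d⁺(v) + d⁺(w) − 2 − [w ∈ N⁺(v)] − [v ∈ N⁺(w)], where [·] is the indicator. Each such arc is the third arc of exactly one open K22 whose fork is ({v,w}, u), so this quantity is the number of open K22s containing that fork. -/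
/-- Per-fork count of open K22s: in a digraph without self-loops, given a fork
`({v, w}, u)` (so `v ≠ w` are in-neighbors of `u`), the number of arcs `(s, z) ∈ E`
with `s ∈ {v, w}` and `z ∉ {u, v, w}` is
`d⁺(v) + d⁺(w) - 2 - [w ∈ N⁺(v)] - [v ∈ N⁺(w)]`. -/
theorem open_k22_count_per_fork {V : Type*} [Fintype V] [DecidableEq V]
    (E : Finset (V × V)) (hloop : ∀ e ∈ E, e.1 ≠ e.2) (u v w : V) (hvw : v ≠ w)
    (hv : (v, u) ∈ E) (hw : (w, u) ∈ E) :
    ((E.filter (fun e => (e.1 = v ∨ e.1 = w) ∧ e.2 ≠ u ∧ e.2 ≠ v ∧ e.2 ≠ w)).card : ℤ)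
      = ((E.filter (fun e => e.1 = v)).card : ℤ)
        + ((E.filter (fun e => e.1 = w)).card : ℤ) - 2
        - (if (v, w) ∈ E then 1 else 0) - (if (w, v) ∈ E then 1 else 0) := by
  classical
  have key : ∀ (p : V × V → Prop) [DecidablePred p],
      ((E.filter p).card : ℤ) = ∑ e ∈ E, if p e then 1 else 0 := by
    intro p _
    rw [Finset.card_filter]
    push_cast
    rfl
  have single : ∀ a : V × V,
      (if a ∈ E then (1 : ℤ) else 0) = ∑ e ∈ E, if e = a then 1 else 0 := by
    intro a
    rw [Finset.sum_ite_eq' E a (fun _ => (1 : ℤ))]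
  have h2 : (2 : ℤ) = (∑ e ∈ E, if e = (v, u) then 1 else 0)
      + ∑ e ∈ E, if e = (w, u) then 1 else 0 := by
    rw [← single, ← single, if_pos hv, if_pos hw]; norm_num
  rw [key, key, key, single (v, w), single (w, v), h2,
    ← Finset.sum_add_distrib, ← Finset.sum_add_distrib, ← Finset.sum_sub_distrib,
    ← Finset.sum_sub_distrib, ← Finset.sum_sub_distrib]
  refine Finset.sum_congr rfl fun e he => ?_
  have hne := hloop e he
  obtain ⟨a, b⟩ := e
  simp only [Prod.mk.injEq] at *
  by_cases hav : a = v <;> by_cases haw : a = w <;>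
    by_cases hbu : b = u <;> by_cases hbv : b = v <;> by_cases hbw : b = w <;>
    simp_all
end
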